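/- arXiv:2405.07353 — 6 statements merged into one kernel-verified Lean document; each statement's English description precedes it below -/
import Mathlib

section
/- Let X = Σ_{i∈V} 1(x_i = black) be the number of black variables and, for a real threshold x > 0, let E_x denote the event {X > x}. Then E_{x/2} testifies risk Pr(E_{x/2}) for E_x: one has E_x ⊆ E_{x/2}, and for every partial assignment ψ ∈ Respect(E_{x/2}), Pr(E_x | ψ) ≤ Pr(E_{x/2}). -/
open Finset

namespace LLLRisk

variable {V : Type*} [Fintype V] [DecidableEq V]

/-- The two colors: `black = true`, `white = false`. -/
abbrev Col := Bool

def black : Col := true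
def white : Col := false

/-- Probability weight of value `b` for a variable that is black with probability `q`. -/
def wgt (q : ℝ) (b : Col) : ℝ := if b = black then q else 1 - q

/-- A partial assignment `ψ` agrees with a full assignment `φ` if they coincide on
all variables set by `ψ`. -/
def Agrees (ψ : V → Option Col) (φ : V → Col) : Prop :=
  ∀ i : V, ∀ b : Col, ψ i = some b → φ i = b

open Classical in
/-- `condPr q E ψ` : the probability that the random full assignment (variable `i`
being black with probability `q i`, independently) lies in `E`, conditioned on
agreeing with the partial assignment `ψ`; the randomness is over `ψ⁻¹(⊥)`. -/
noncomputable def condPr (q : V → ℝ) (E : Set (V → Col)) (ψ : V → Option Col) : ℝ :=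
  ∑ φ : V → Col,
    if Agrees ψ φ ∧ φ ∈ E then ∏ i : V, (if ψ i = none then wgt (q i) (φ i) else 1) else 0

/-- Unconditional probability of an event. -/
noncomputable def pr (q : V → ℝ) (E : Set (V → Col)) : ℝ :=
  condPr q E (fun _ => none)

/-- `Respects vbl E' ψ` : `ψ` is a retraction of some full assignment `φ ∉ E'` such
that in addition either all variables of `vbl` that are white under `φ` are
retracted, or no variable of `vbl` that is black under `φ` is retracted. -/
def Respects (vbl : Finset V) (E' : Set (V → Col)) (ψ : V → Option Col) : Prop :=
  ∃ φ : V → Col, φ ∉ E' ∧ Agrees ψ φ ∧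
    ((∀ i ∈ vbl, φ i = white → ψ i = none) ∨ (∀ i ∈ vbl, φ i = black → ψ i ≠ none))

/-- The event `E'` (with variable set `vbl'`) testifies risk `x` for the event `E`. -/
def Testifies (q : V → ℝ) (vbl' : Finset V) (E E' : Set (V → Col)) (x : ℝ) : Prop :=
  E ⊆ E' ∧ pr q E' ≤ x ∧
    ∀ ψ : V → Option Col, Respects vbl' E' ψ → condPr q E ψ ≤ x

/-- The event `E` depends only on the coordinates in `vbl`. -/
def DependsOn (E : Set (V → Col)) (vbl : Finset V) : Prop :=
  ∀ φ φ' : V → Col, (∀ i ∈ vbl, φ i = φ' i) → (φ ∈ E ↔ φ' ∈ E)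

/-- Rank realizing the order `black < ⊥ < white` on `Option Col`. -/
def rank : Option Col → ℕ
  | some b => if b = black then 0 else 2
  | none => 1

/-- `E` is monotone increasing (w.r.t. the coordinates in `vbl`):
`Pr(E ∣ ψ) ≤ Pr(E ∣ φ)` whenever `ψ i ≤ φ i` for all `i ∈ vbl`,
where `black < ⊥ < white`. -/
def MonotoneIncrOn (q : V → ℝ) (E : Set (V → Col)) (vbl : Finset V) : Prop :=
  ∀ ψ φ : V → Option Col, (∀ i ∈ vbl, rank (ψ i) ≤ rank (φ i)) →
    condPr q E ψ ≤ condPr q E φ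

end LLLRisk

namespace LLLRisk

/-- Number of black variables in a full assignment. -/
def numBlack {V : Type*} [Fintype V] [DecidableEq V] (φ : V → Col) : ℕ :=
  (Finset.univ.filter fun i => φ i = black).card

/-! The conditional law given a partial assignment `ψ` is the law of `ψ` filled in by an
independent full sample `φ`. If `ψ` respects `E_{x/2}`, witnessed by some `φ₀` with at most
`x/2` black variables, then `ψ` fixes at most `x/2` variables to black, so the filled-in
assignment can have more than `x` black variables only if `φ` itself has more than `x/2`.
Hence `Pr(E_x ∣ ψ) ≤ Pr(E_{x/2})`. -/

section FillIn

theorem sum_wgt (r : ℝ) : ∑ b : Col, wgt r b = 1 := by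
  simp [wgt, black]

theorem wgt_nonneg {r : ℝ} (hr : r ∈ Set.Icc (0 : ℝ) 1) (b : Col) : 0 ≤ wgt r b := by
  unfold wgt
  split <;> linarith [hr.1, hr.2]

variable {V : Type*}

def fillIn (ψ : V → Option Col) (φ : V → Col) : V → Col := fun i => (ψ i).getD (φ i)

@[simp]
theorem fillIn_none (φ : V → Col) : fillIn (fun _ => none) φ = φ := rfl

theorem agrees_fillIn (ψ : V → Option Col) (φ : V → Col) : Agrees ψ (fillIn ψ φ) := by
  intro i b h
  simp [fillIn, h]

variable [Fintype V] [DecidableEq V]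

theorem filter_fillIn_eq_piFinset {ψ : V → Option Col} {φ' : V → Col} (h : Agrees ψ φ') :
    univ.filter (fun φ => fillIn ψ φ = φ') =
      Fintype.piFinset fun i => if ψ i = none then {φ' i} else univ := by
  ext φ
  simp only [mem_filter, mem_univ, true_and, Fintype.mem_piFinset, funext_iff]
  refine forall_congr' fun i => ?_
  rcases hi : ψ i with _ | b
  · simp [fillIn, hi]
  · simp [fillIn, hi, h i b hi]

open Classical in
theorem sum_prod_wgt_fiber_fillIn (q : V → ℝ) (ψ : V → Option Col) (φ' : V → Col) :
    ∑ φ ∈ univ.filter (fun φ => fillIn ψ φ = φ'), ∏ i, wgt (q i) (φ i) =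
      if Agrees ψ φ' then ∏ i, (if ψ i = none then wgt (q i) (φ' i) else 1) else 0 := by
  split_ifs with h
  · rw [filter_fillIn_eq_piFinset h, ← prod_univ_sum]
    refine prod_congr rfl fun i _ => ?_
    split_ifs
    · exact sum_singleton _ _
    · exact sum_wgt _
  · rw [filter_eq_empty_iff.2 fun φ _ hφ => h (by rw [← hφ]; exact agrees_fillIn ψ φ), sum_empty]

open Classical in
theorem condPr_eq_sum_fillIn (q : V → ℝ) (E : Set (V → Col)) (ψ : V → Option Col) :
    condPr q E ψ = ∑ φ, if fillIn ψ φ ∈ E then ∏ i, wgt (q i) (φ i) else 0 := by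
  rw [← sum_fiberwise_of_maps_to (g := fillIn ψ) (t := univ) fun _ _ => mem_univ _]
  refine sum_congr rfl fun φ' _ => ?_
  have hfiber : ∑ φ ∈ univ.filter (fun φ => fillIn ψ φ = φ'),
      (if fillIn ψ φ ∈ E then ∏ i, wgt (q i) (φ i) else 0) =
      if φ' ∈ E then ∑ φ ∈ univ.filter (fun φ => fillIn ψ φ = φ'), ∏ i, wgt (q i) (φ i)
      else 0 := by
    calc _ = ∑ φ ∈ univ.filter (fun φ => fillIn ψ φ = φ'),
          (if φ' ∈ E then ∏ i, wgt (q i) (φ i) else 0) :=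
          sum_congr rfl fun φ hφ => by rw [(mem_filter.1 hφ).2]
      _ = _ := by rw [sum_ite_irrel, sum_const_zero]
  rw [hfiber, sum_prod_wgt_fiber_fillIn, ite_and]
  split_ifs <;> rfl

theorem condPr_le_pr_of_fillIn {q : V → ℝ} (hq : ∀ i, q i ∈ Set.Icc (0 : ℝ) 1)
    {E E' : Set (V → Col)} {ψ : V → Option Col} (h : ∀ φ, fillIn ψ φ ∈ E → φ ∈ E') :
    condPr q E ψ ≤ pr q E' := by
  classical
  rw [pr, condPr_eq_sum_fillIn, condPr_eq_sum_fillIn]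
  refine sum_le_sum fun φ _ => ?_
  rw [fillIn_none]
  by_cases hφ : fillIn ψ φ ∈ E
  · simp only [hφ, h φ hφ, if_true, le_rfl]
  · rw [if_neg hφ]
    exact ite_nonneg (prod_nonneg fun i _ => wgt_nonneg (hq i) _) le_rfl

theorem numBlack_fillIn_le {ψ : V → Option Col} {φ₀ : V → Col} (h : Agrees ψ φ₀)
    (φ : V → Col) : numBlack (fillIn ψ φ) ≤ numBlack φ₀ + numBlack φ := by
  refine (card_le_card fun i hi => ?_).trans (card_union_le _ _)
  simp only [mem_filter, mem_univ, true_and, mem_union] at hi ⊢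
  rcases hψ : ψ i with _ | b
  · simp_all [fillIn]
  · simp only [fillIn, hψ, Option.getD_some] at hi
    exact Or.inl (h i b hψ ▸ hi)

end FillIn

theorem threshold_risk_general {V : Type*} [Fintype V] [DecidableEq V]
    (q : V → ℝ) (hq : ∀ i, q i ∈ Set.Icc (0 : ℝ) 1)
    (x : ℝ) :
    Testifies q Finset.univ
      {φ : V → Col | x < (numBlack φ : ℝ)}
      {φ : V → Col | x / 2 < (numBlack φ : ℝ)}
      (pr q {φ : V → Col | x / 2 < (numBlack φ : ℝ)}) := by
  refine ⟨fun φ hφ => ?_, le_rfl, ?_⟩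
  · have : (0 : ℝ) ≤ numBlack φ := Nat.cast_nonneg _
    simp only [Set.mem_ofPred_eq] at hφ ⊢
    rcases le_total 0 x with hx | hx <;> linarith
  · rintro ψ ⟨φ₀, hφ₀, hψφ₀, -⟩
    refine condPr_le_pr_of_fillIn hq fun φ hφ => ?_
    have hcount : (numBlack (fillIn ψ φ) : ℝ) ≤ numBlack φ₀ + numBlack φ := by
      exact_mod_cast numBlack_fillIn_le hψφ₀ φ
    simp only [Set.mem_ofPred_eq, not_lt] at hφ₀ hφ ⊢
    linarith

/-- For `X = Σ_i 1(x_i = black)` and a real threshold `x > 0`, the event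
`E_{x/2} = {X > x/2}` testifies risk `Pr(E_{x/2})` for the event `E_x = {X > x}`:
`E_x ⊆ E_{x/2}` and `Pr(E_x ∣ ψ) ≤ Pr(E_{x/2})` for every `ψ ∈ Respect(E_{x/2})`. -/
theorem threshold_risk {V : Type*} [Fintype V] [DecidableEq V]
    (q : V → ℝ) (hq : ∀ i, q i ∈ Set.Icc (0 : ℝ) 1)
    (x : ℝ) (hx : 0 < x) :
    Testifies q Finset.univ
      {φ : V → Col | x < (numBlack φ : ℝ)}
      {φ : V → Col | x / 2 < (numBlack φ : ℝ)}
      (pr q {φ : V → Col | x / 2 < (numBlack φ : ℝ)}) :=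
  threshold_risk_general q hq x

end LLLRisk
end

section
/- Let E1 and E2 be events defined over the same finite family of independent {black, white}-valued random variables, and suppose an event E1' testifies risk p1 for E1 and an event E2' testifies risk p2 for E2. Then the event E1' ∪ E2' testifies risk p1 + p2 for E1 ∪ E2; that is, E1 ∪ E2 ⊆ E1' ∪ E2', Pr(E1' ∪ E2') ≤ p1 + p2, and Pr(E1 ∪ E2 | ψ) ≤ p1 + p2 for every ψ ∈ Respect(E1' ∪ E2'). -/
open Finset

namespace LLLRisk

lemma weight_nonneg {V : Type*} [Fintype V] [DecidableEq V]
    (q : V → ℝ) (hq : ∀ i, q i ∈ Set.Icc (0 : ℝ) 1)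
    (ψ : V → Option Col) (φ : V → Col) :
    0 ≤ ∏ i : V, (if ψ i = none then wgt (q i) (φ i) else 1) := by
  classical
  refine Finset.prod_nonneg fun i _ => ?_
  split_ifs
  · unfold wgt
    split_ifs
    · exact (hq i).1
    · linarith [(hq i).2]
  · norm_num

lemma condPr_union_le {V : Type*} [Fintype V] [DecidableEq V]
    (q : V → ℝ) (hq : ∀ i, q i ∈ Set.Icc (0 : ℝ) 1)
    (E1 E2 : Set (V → Col)) (ψ : V → Option Col) :
    condPr q (E1 ∪ E2) ψ ≤ condPr q E1 ψ + condPr q E2 ψ := by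
  classical
  unfold condPr
  rw [← Finset.sum_add_distrib]
  refine Finset.sum_le_sum fun φ _ => ?_
  have hw := weight_nonneg q hq ψ φ
  by_cases hA : Agrees ψ φ
  · by_cases h1 : φ ∈ E1
    · by_cases h2 : φ ∈ E2 <;> simp [hA, h1, h2, Set.mem_union] <;> linarith
    · by_cases h2 : φ ∈ E2 <;> simp [hA, h1, h2, Set.mem_union] <;> linarith
  · simp [hA]

lemma respects_union_left {V : Type*} [Fintype V] [DecidableEq V]
    (vbl : Finset V) (E1' E2' : Set (V → Col)) (ψ : V → Option Col)
    (h : Respects vbl (E1' ∪ E2') ψ) : Respects vbl E1' ψ := by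
  obtain ⟨φ, hφ, hA, hside⟩ := h
  exact ⟨φ, fun h => hφ (Set.mem_union_left _ h), hA, hside⟩

lemma respects_union_right {V : Type*} [Fintype V] [DecidableEq V]
    (vbl : Finset V) (E1' E2' : Set (V → Col)) (ψ : V → Option Col)
    (h : Respects vbl (E1' ∪ E2') ψ) : Respects vbl E2' ψ := by
  obtain ⟨φ, hφ, hA, hside⟩ := h
  exact ⟨φ, fun h => hφ (Set.mem_union_right _ h), hA, hside⟩

end LLLRisk

namespace LLLRisk

/-- **Union bound for risk.** If `E1'` testifies risk `p1` for `E1` and `E2'`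
testifies risk `p2` for `E2` (events over the same family of independent
`{black, white}`-valued variables, with variable set `vbl`), then `E1' ∪ E2'`
testifies risk `p1 + p2` for `E1 ∪ E2`. -/
theorem risk_union {V : Type*} [Fintype V] [DecidableEq V]
    (q : V → ℝ) (hq : ∀ i, q i ∈ Set.Icc (0 : ℝ) 1)
    (vbl : Finset V) (E1 E2 E1' E2' : Set (V → Col)) (p1 p2 : ℝ)
    (h1 : Testifies q vbl E1 E1' p1) (h2 : Testifies q vbl E2 E2' p2) :
    Testifies q vbl (E1 ∪ E2) (E1' ∪ E2') (p1 + p2) := by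
  obtain ⟨hs1, hp1, hc1⟩ := h1
  obtain ⟨hs2, hp2, hc2⟩ := h2
  refine ⟨Set.union_subset_union hs1 hs2, ?_, ?_⟩
  · calc pr q (E1' ∪ E2') ≤ pr q E1' + pr q E2' :=
        condPr_union_le q hq E1' E2' _
      _ ≤ p1 + p2 := add_le_add hp1 hp2
  · intro ψ hψ
    calc condPr q (E1 ∪ E2) ψ ≤ condPr q E1 ψ + condPr q E2 ψ :=
        condPr_union_le q hq E1 E2 ψ
      _ ≤ p1 + p2 := add_le_add
        (hc1 ψ (respects_union_left vbl E1' E2' ψ hψ))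
        (hc2 ψ (respects_union_right vbl E1' E2' ψ hψ))

end LLLRisk
end

section
/- Let E be an event over a finite family of independent random variables and let 0 < q < 1. Then Pr(E^q_danger) ≤ f(E)/q, where f(E) is the fragility of E; consequently the risk of E is at most max(f(E)/q, q), testified by E^q_danger. -/
open Finset

namespace LLLGen

variable {V : Type*} [Fintype V] [DecidableEq V] {A : Type*} [Fintype A] [DecidableEq A]

/-- A partial assignment `ψ` agrees with a full assignment `φ` if they coincide on
all variables set by `ψ`. -/
def Agrees (ψ : V → Option A) (φ : V → A) : Prop :=
  ∀ i : V, ∀ a : A, ψ i = some a → φ i = a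

/-- `μ` is a family of probability distributions, one for each variable. -/
def IsDist (μ : V → A → ℝ) : Prop :=
  ∀ i, (∀ a, 0 ≤ μ i a) ∧ ∑ a : A, μ i a = 1

open Classical in
/-- `condPr μ E ψ` : the probability that the random full assignment (variable `i`
drawn according to `μ i`, independently) lies in `E`, conditioned on agreeing with
the partial assignment `ψ`; the randomness is over the variables in `ψ⁻¹(⊥)`. -/
noncomputable def condPr (μ : V → A → ℝ) (E : Set (V → A)) (ψ : V → Option A) : ℝ :=
  ∑ φ : V → A,
    if Agrees ψ φ ∧ φ ∈ E then ∏ i : V, (if ψ i = none then μ i (φ i) else 1) else 0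

/-- Unconditional probability of an event. -/
noncomputable def pr (μ : V → A → ℝ) (E : Set (V → A)) : ℝ :=
  condPr μ E (fun _ => none)

/-- `E^q_danger`: the set of full assignments `φ` such that some retraction `ψ`
of `φ` satisfies `Pr(E ∣ ψ) > q`. -/
def dangerSet (μ : V → A → ℝ) (E : Set (V → A)) (q : ℝ) : Set (V → A) :=
  {φ | ∃ ψ : V → Option A, Agrees ψ φ ∧ q < condPr μ E ψ}

end LLLGen

namespace LLLGen

open Classical in
/-- The fragility of `E`: draw two independent full assignments `φ₀, φ₁` according
to the distribution of the variables; the fragility is the probability that `E`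
occurs on the mixed assignment `ψ_a : i ↦ φ_{a i}(i)` for at least one `a`. -/
noncomputable def fragility {V : Type*} [Fintype V] [DecidableEq V]
    {A : Type*} [Fintype A] [DecidableEq A]
    (μ : V → A → ℝ) (E : Set (V → A)) : ℝ :=
  ∑ φ₀ : V → A, ∑ φ₁ : V → A,
    if ∃ a : V → Bool, (fun i => if a i then φ₁ i else φ₀ i) ∈ E
    then (∏ i : V, μ i (φ₀ i)) * (∏ i : V, μ i (φ₁ i)) else 0

section Aux

variable {V : Type*} [Fintype V] [DecidableEq V] {A : Type*} [Fintype A] [DecidableEq A]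

/-- Fill a partial assignment using a full assignment on the unset variables. -/
def fill (ψ : V → Option A) (φ : V → A) : V → A := fun i => (ψ i).getD (φ i)

lemma agrees_fill (ψ : V → Option A) (φ : V → A) : Agrees ψ (fill ψ φ) := by
  intro i a h; simp [fill, h]

open Classical in
lemma condPr_eq_sum_fill (μ : V → A → ℝ) (hμ : IsDist μ) (E : Set (V → A))
    (ψ : V → Option A) :
    condPr μ E ψ = ∑ φ₁ : V → A, if fill ψ φ₁ ∈ E then ∏ i, μ i (φ₁ i) else 0 := by
  classical
  rw [← Finset.sum_fiberwise Finset.univ (fill ψ)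
    (fun φ₁ => if fill ψ φ₁ ∈ E then ∏ i, μ i (φ₁ i) else 0)]
  unfold condPr
  refine Finset.sum_congr rfl fun φ _ => ?_
  by_cases hA : Agrees ψ φ
  · have h1 : ∑ φ₁ ∈ Finset.univ.filter (fun φ₁ => fill ψ φ₁ = φ),
        (if fill ψ φ₁ ∈ E then ∏ i, μ i (φ₁ i) else 0)
        = ∑ φ₁ ∈ Finset.univ.filter (fun φ₁ => fill ψ φ₁ = φ),
        (if φ ∈ E then ∏ i, μ i (φ₁ i) else 0) :=
      Finset.sum_congr rfl fun g hg => by rw [(Finset.mem_filter.mp hg).2]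
    rw [h1]
    have hfiber : Finset.univ.filter (fun φ₁ => fill ψ φ₁ = φ) =
        Fintype.piFinset (fun i => if ψ i = none then ({φ i} : Finset A) else Finset.univ) := by
      ext g
      simp only [Finset.mem_filter, Finset.mem_univ, true_and, Fintype.mem_piFinset]
      constructor
      · intro h i
        by_cases hi : ψ i = none
        · simp [hi, ← h, fill]
        · simp [hi]
      · intro h
        funext i
        by_cases hi : ψ i = none
        · have := h i; simp [hi] at this; simp [fill, hi, this]
        · obtain ⟨a, ha⟩ := Option.ne_none_iff_exists'.mp hi
          simp [fill, ha, hA i a ha]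
    have hsum : ∑ g ∈ Fintype.piFinset
        (fun i => if ψ i = none then ({φ i} : Finset A) else Finset.univ),
        ∏ i, μ i (g i) = ∏ i, if ψ i = none then μ i (φ i) else 1 := by
      rw [← Finset.prod_univ_sum]
      refine Finset.prod_congr rfl fun i _ => ?_
      by_cases hi : ψ i = none
      · simp [hi]
      · simp [hi, (hμ i).2]
    by_cases hE : φ ∈ E
    · simp only [hE, if_true, hA, and_self, hfiber, hsum]
    · simp [hE, hA]
  · have hempty : Finset.univ.filter (fun φ₁ => fill ψ φ₁ = φ) = ∅ := by
      ext g
      simp only [Finset.mem_filter, Finset.mem_univ, true_and, Finset.notMem_empty, iff_false]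
      intro h
      exact hA (h ▸ agrees_fill ψ g)
    simp [hempty, hA]

open Classical in
lemma pr_eq_sum (μ : V → A → ℝ) (E : Set (V → A)) :
    pr μ E = ∑ φ : V → A, if φ ∈ E then ∏ i, μ i (φ i) else 0 := by
  unfold pr condPr
  refine Finset.sum_congr rfl fun φ _ => ?_
  have hA : Agrees (fun _ : V => (none : Option A)) φ := fun i a h => by simp at h
  simp [hA]

end Aux

/-- `Pr(E^q_danger) ≤ f(E)/q` where `f(E)` is the fragility of `E`; consequently
the risk of `E` is at most `max (f(E)/q) q`, testified by `E^q_danger`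
(with `Respect = Retract`). -/
theorem fragility_bounds_risk {V : Type*} [Fintype V] [DecidableEq V]
    {A : Type*} [Fintype A] [DecidableEq A]
    (μ : V → A → ℝ) (hμ : IsDist μ) (E : Set (V → A))
    (q : ℝ) (hq0 : 0 < q) (hq1 : q < 1) :
    pr μ (dangerSet μ E q) ≤ fragility μ E / q ∧
    E ⊆ dangerSet μ E q ∧
    pr μ (dangerSet μ E q) ≤ max (fragility μ E / q) q ∧
    (∀ ψ : V → Option A, ∀ φ : V → A, φ ∉ dangerSet μ E q → Agrees ψ φ →
      condPr μ E ψ ≤ max (fragility μ E / q) q) := by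
  classical
  have wnn : ∀ φ : V → A, 0 ≤ ∏ i, μ i (φ i) := fun φ =>
    Finset.prod_nonneg fun i _ => (hμ i).1 (φ i)
  -- main inequality : q * Pr(danger) ≤ fragility
  have hmain : q * pr μ (dangerSet μ E q) ≤ fragility μ E := by
    rw [pr_eq_sum, Finset.mul_sum]
    unfold fragility
    refine Finset.sum_le_sum fun φ₀ _ => ?_
    by_cases hd : φ₀ ∈ dangerSet μ E q
    · obtain ⟨ψ, hAg, hcond⟩ := hd
      have step1 : condPr μ E ψ * ∏ i, μ i (φ₀ i)
          ≤ ∑ φ₁ : V → A,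
            if ∃ a : V → Bool, (fun i => if a i then φ₁ i else φ₀ i) ∈ E
            then (∏ i : V, μ i (φ₀ i)) * (∏ i : V, μ i (φ₁ i)) else 0 := by
        rw [condPr_eq_sum_fill μ hμ E ψ, Finset.sum_mul]
        refine Finset.sum_le_sum fun φ₁ _ => ?_
        by_cases hE : fill ψ φ₁ ∈ E
        · have hex : ∃ a : V → Bool, (fun i => if a i then φ₁ i else φ₀ i) ∈ E := by
            refine ⟨fun i => (ψ i).isNone, ?_⟩
            have : (fun i => if (ψ i).isNone then φ₁ i else φ₀ i) = fill ψ φ₁ := by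
              funext i
              cases hψ : ψ i with
              | none => simp [fill, hψ]
              | some a => simp [fill, hψ, hAg i a hψ]
            rw [this]; exact hE
          simp only [hE, if_true, hex]
          rw [mul_comm]
        · simp only [hE, if_false, zero_mul]
          by_cases hex : ∃ a : V → Bool, (fun i => if a i then φ₁ i else φ₀ i) ∈ E
          · simp only [hex, if_true]
            exact mul_nonneg (wnn φ₀) (wnn φ₁)
          · simp [hex]
      by_cases hd' : φ₀ ∈ dangerSet μ E q
      · simp only [hd', if_true]
        calc q * ∏ i, μ i (φ₀ i) ≤ condPr μ E ψ * ∏ i, μ i (φ₀ i) :=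
              mul_le_mul_of_nonneg_right hcond.le (wnn φ₀)
          _ ≤ _ := step1
      · exact absurd ⟨ψ, hAg, hcond⟩ hd'
    · simp only [hd, if_false, mul_zero]
      refine Finset.sum_nonneg fun φ₁ _ => ?_
      by_cases hex : ∃ a : V → Bool, (fun i => if a i then φ₁ i else φ₀ i) ∈ E
      · simp only [hex, if_true]; exact mul_nonneg (wnn φ₀) (wnn φ₁)
      · simp [hex]
  have h1 : pr μ (dangerSet μ E q) ≤ fragility μ E / q := by
    rw [le_div_iff₀ hq0, mul_comm]
    exact hmain
  have h2 : E ⊆ dangerSet μ E q := by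
    intro φ hφ
    have hA : Agrees (fun i => some (φ i)) φ := fun i a h => Option.some.inj h
    refine ⟨fun i => some (φ i), hA, ?_⟩
    have hone : condPr μ E (fun i => some (φ i)) = 1 := by
      unfold condPr
      rw [Finset.sum_eq_single_of_mem φ (Finset.mem_univ φ)]
      · rw [if_pos ⟨hA, hφ⟩]
        simp
      · intro φ' _ hne
        have hnA : ¬ Agrees (fun i => some (φ i)) φ' := by
          intro hA'
          exact hne (funext fun i => hA' i (φ i) rfl)
        simp [hnA]
    rw [hone]; exact hq1
  refine ⟨h1, h2, h1.trans (le_max_left _ _), ?_⟩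
  intro ψ φ hφ hAg
  have : ¬ q < condPr μ E ψ := fun h => hφ ⟨ψ, hAg, h⟩
  exact (not_lt.mp this).trans (le_max_right _ _)

end LLLGen
end

section
/- Per-non-edge success probability in SlackGeneration: run SlackGeneration on S ⊆ V with activation probability p₀ ∈ (0,1] and palette [χ], χ ≥ 2: each u ∈ S is independently activated with probability p₀; each activated u picks c_u uniformly at random from [χ]; u retains c_u iff no other activated node of S adjacent to u picked the same color. Let v be a node such that every node of S ∪ {v} has at most Δ_s neighbors in S (with Δ_s ≥ 2), and let {u, w} ⊆ N(v) ∩ S be a non-adjacent pair. Then the probability that u and w are both activated with a common color which both retain and which no node of (N(v) ∩ S) \ {u, w} picks is at least (p₀²/χ) · ((χ−1)/χ)^{3Δ_s}. -/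
open Finset

namespace SlackGen

variable {V : Type*} [Fintype V] [DecidableEq V] {χ : ℕ}

/-- An outcome of SlackGeneration: the activation status and the color choice of
each node. -/
abbrev Outcome (V : Type*) (χ : ℕ) := (V → Bool) × (V → Fin χ)

/-- Probability weight of an outcome: each node is activated independently with
probability `p₀`, and independently picks a uniformly random color from `[χ]`. -/
noncomputable def wgt (p₀ : ℝ) (χ : ℕ) {V : Type*} [Fintype V] (ω : Outcome V χ) : ℝ :=
  ∏ v : V, ((if ω.1 v then p₀ else 1 - p₀) * (1 / (χ : ℝ)))

/-- `u` picks color `c`: `u ∈ S`, `u` is activated, and `u` chose color `c`. -/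
def Picks (S : Finset V) (ω : Outcome V χ) (u : V) (c : Fin χ) : Prop :=
  u ∈ S ∧ ω.1 u = true ∧ ω.2 u = c

/-- `u ∈ S` retains its color: `u` is activated and no other activated node of `S`
adjacent to `u` chose the same color. -/
def Retains (G : SimpleGraph V) (S : Finset V) (ω : Outcome V χ) (u : V) : Prop :=
  u ∈ S ∧ ω.1 u = true ∧
    ∀ w ∈ S, w ≠ u → G.Adj u w → ω.1 w = true → ω.2 w ≠ ω.2 u

open Classical in
/-- The slack increase of `v`: the number of neighbors of `v` that retain a color
minus the number of distinct colors retained by neighbors of `v`. -/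
noncomputable def slackInc (G : SimpleGraph V) (S : Finset V) (v : V)
    (ω : Outcome V χ) : ℤ :=
  ((Finset.univ.filter fun u => G.Adj v u ∧ Retains G S ω u).card : ℤ) -
    ((Finset.univ.filter fun c : Fin χ =>
        ∃ u, G.Adj v u ∧ Retains G S ω u ∧ ω.2 u = c).card : ℤ)

open Classical in
/-- The non-edges of the graph induced on `N(v) ∩ S`: unordered pairs of distinct
non-adjacent vertices, both neighbors of `v` and both in `S`. -/
noncomputable def nbrNonEdges (G : SimpleGraph V) (v : V) (S : Finset V) :
    Finset (Sym2 V) :=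
  Finset.univ.filter fun e : Sym2 V =>
    ¬ e.IsDiag ∧ e ∉ G.edgeSet ∧ ∀ u ∈ e, G.Adj v u ∧ u ∈ S

end SlackGen

/-! For a colour `c`, let `E_c` be the event that `u` and `w` both pick `c` while no node of
the conflict set `T = ((N(u) ∪ N(w) ∪ N(v)) ∩ S) \ {u, w}` picks `c`. As `u` and `w` are not
adjacent, `E_c` implies the success event. It constrains each node separately, so under the
product measure `P(E_c) = (p₀/χ)² (1 - p₀/χ)^|T|`, and `|T| ≤ 3Δs` because `u`, `w`, `v` each
have at most `Δs` neighbours in `S`. The events `E_c` are disjoint, so summing over the `χ`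
colours gives the bound. -/

namespace SlackGen

section Probability

variable {V : Type*} [Fintype V] [DecidableEq V] {χ : ℕ} (p₀ : ℝ)

noncomputable def nodeWgt (χ : ℕ) (b : Bool) : ℝ :=
  (if b then p₀ else 1 - p₀) * (1 / (χ : ℝ))

noncomputable def prob (χ : ℕ) (E : Outcome V χ → Prop) [DecidablePred E] : ℝ :=
  ∑ ω, if E ω then wgt p₀ χ ω else 0

open Classical in
noncomputable def nodeProb (P : Bool → Fin χ → Prop) : ℝ :=
  ∑ b, ∑ y, if P b y then nodeWgt p₀ χ b else 0

omit [DecidableEq V] in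
lemma wgt_eq_prod_nodeWgt (ω : Outcome V χ) : wgt p₀ χ ω = ∏ x, nodeWgt p₀ χ (ω.1 x) := rfl

lemma sum_outcome_prod {α β : Type*} [Fintype α] [Fintype β] (F : V → α → β → ℝ) :
    ∑ ω : (V → α) × (V → β), ∏ x, F x (ω.1 x) (ω.2 x) = ∏ x, ∑ a, ∑ b, F x a b := by
  simp_rw [← Fintype.sum_prod_type' (f := F _), Fintype.prod_sum]
  exact (Fintype.sum_equiv (Equiv.arrowProdEquivProdArrow V (fun _ => α) (fun _ => β)) _ _
    fun _ => rfl).symm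

lemma prod_nodeProb_eq_prob (P : V → Bool → Fin χ → Prop) (E : Outcome V χ → Prop)
    [DecidablePred E] (hE : ∀ ω, E ω ↔ ∀ x, P x (ω.1 x) (ω.2 x)) :
    prob p₀ χ E = ∏ x, nodeProb p₀ (P x) := by
  classical
  simp only [prob, nodeProb, ← sum_outcome_prod, Fintype.prod_ite_zero, hE,
    wgt_eq_prod_nodeWgt]

variable {p₀}

lemma nodeWgt_nonneg (hp₀ : p₀ ∈ Set.Icc (0 : ℝ) 1) (b : Bool) : 0 ≤ nodeWgt p₀ χ b := by
  obtain ⟨h0, h1⟩ := hp₀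
  unfold nodeWgt
  cases b <;> simp only [Bool.false_eq_true, if_true, if_false] <;> positivity

lemma sum_prob_le_prob {ι : Type*} [Fintype ι] (hp₀ : p₀ ∈ Set.Icc (0 : ℝ) 1)
    (E : ι → Outcome V χ → Prop) [∀ i, DecidablePred (E i)] (F : Outcome V χ → Prop)
    [DecidablePred F] (hdisj : ∀ ω i j, E i ω → E j ω → i = j) (hEF : ∀ ω i, E i ω → F ω) :
    ∑ i, prob p₀ χ (E i) ≤ prob p₀ χ F := by
  unfold prob
  rw [Finset.sum_comm]
  refine Finset.sum_le_sum fun ω _ => ?_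
  by_cases h : ∃ i, E i ω
  · obtain ⟨i, hi⟩ := h
    rw [Finset.sum_eq_single i (fun j _ hji => if_neg fun hj => hji (hdisj ω j i hj hi))
      (by simp), if_pos hi, if_pos (hEF ω i hi)]
  · push Not at h
    simp only [h, if_false, Finset.sum_const_zero]
    split_ifs
    exacts [Finset.prod_nonneg fun x _ => nodeWgt_nonneg hp₀ _, le_rfl]

lemma nodeProb_true (hχ : χ ≠ 0) : nodeProb p₀ (fun (_ : Bool) (_ : Fin χ) => True) = 1 := by
  simp only [nodeProb, nodeWgt, if_true, Bool.false_eq_true, if_false, Fintype.sum_bool,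
    sum_const, card_univ, Fintype.card_fin, nsmul_eq_mul]
  field_simp
  ring

lemma nodeProb_picks (c : Fin χ) :
    nodeProb p₀ (fun b y => b = true ∧ y = c) = p₀ / χ := by
  simp [nodeProb, nodeWgt, div_eq_mul_inv]

lemma nodeProb_not (hχ : χ ≠ 0) (P : Bool → Fin χ → Prop) :
    nodeProb p₀ (fun b y => ¬ P b y) = 1 - nodeProb p₀ P := by
  classical
  rw [← nodeProb_true hχ]
  simp only [nodeProb, if_true, ← Finset.sum_sub_distrib]
  refine Finset.sum_congr rfl fun b _ => Finset.sum_congr rfl fun y _ => ?_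
  split_ifs <;> ring

open Classical in
lemma prob_picks_and_not_picks (hχ : χ ≠ 0) {S A T : Finset V} (hA : A ⊆ S) (hT : T ⊆ S)
    (hAT : Disjoint A T) (c : Fin χ) :
    prob p₀ χ (fun ω => (∀ x ∈ A, Picks S ω x c) ∧ ∀ x ∈ T, ¬ Picks S ω x c) =
      (p₀ / χ) ^ #A * (1 - p₀ / χ) ^ #T := by
  rw [prod_nodeProb_eq_prob p₀
    (fun x b y => (x ∈ A → b = true ∧ y = c) ∧ (x ∈ T → ¬ (b = true ∧ y = c))) _ fun ω => ?_]
  · have hout : ∀ x ∈ univ, x ∉ A ∪ T → nodeProb p₀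
        (fun b y => (x ∈ A → b = true ∧ y = c) ∧ (x ∈ T → ¬ (b = true ∧ y = c))) = 1 := by
      intro x _ hx
      rw [Finset.mem_union, not_or] at hx
      simpa only [hx.1, hx.2, false_imp_iff, and_self] using nodeProb_true hχ
    rw [← Finset.prod_subset (subset_univ (A ∪ T)) hout, prod_union hAT]
    congr 1 <;> refine Finset.prod_eq_pow_card fun x hx => ?_
    · have hxT : x ∉ T := disjoint_left.mp hAT hx
      simpa only [hx, hxT, true_imp_iff, false_imp_iff, and_true] using nodeProb_picks c
    · have hxA : x ∉ A := disjoint_right.mp hAT hx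
      simpa only [hx, hxA, true_imp_iff, false_imp_iff, true_and, nodeProb_picks]
        using nodeProb_not hχ (fun b y => b = true ∧ y = c)
  · constructor
    · rintro ⟨hpick, hnpick⟩ x
      exact ⟨fun hx => (hpick x hx).2, fun hx h => hnpick x hx ⟨hT hx, h⟩⟩
    · intro h
      exact ⟨fun x hx => ⟨hA hx, (h x).1 hx⟩, fun x hx hpick => (h x).2 hx hpick.2⟩

lemma sub_one_div_pow_le_one_sub_div_pow (hp₀ : p₀ ∈ Set.Icc (0 : ℝ) 1) (hχ : χ ≠ 0)
    {m n : ℕ} (hnm : n ≤ m) : (((χ : ℝ) - 1) / χ) ^ m ≤ (1 - p₀ / χ) ^ n := by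
  have hχ1 : (1 : ℝ) ≤ χ := by exact_mod_cast Nat.one_le_iff_ne_zero.mpr hχ
  have hq0 : 0 ≤ ((χ : ℝ) - 1) / χ := by positivity
  have hq1 : ((χ : ℝ) - 1) / χ ≤ 1 := by rw [div_le_one (by positivity)]; linarith
  have hq : ((χ : ℝ) - 1) / χ ≤ 1 - p₀ / χ := by
    rw [sub_div, div_self (by positivity)]
    gcongr
    exact hp₀.2
  calc (((χ : ℝ) - 1) / χ) ^ m ≤ (((χ : ℝ) - 1) / χ) ^ n := pow_le_pow_of_le_one hq0 hq1 hnm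
    _ ≤ (1 - p₀ / χ) ^ n := pow_le_pow_left₀ hq0 hq _

end Probability

lemma retains_of_picks {V : Type*} {χ : ℕ} {G : SimpleGraph V} {S : Finset V} {ω : Outcome V χ}
    {u : V} {c : Fin χ} (hpick : Picks S ω u c) (hfree : ∀ x, G.Adj u x → ¬ Picks S ω x c) :
    Retains G S ω u :=
  ⟨hpick.1, hpick.2.1, fun x hxS _ hadj hx hc => hfree x hadj ⟨hxS, hx, hc.trans hpick.2.2⟩⟩

section Conflicts

variable {V : Type*} [Fintype V] [DecidableEq V] {χ : ℕ} (G : SimpleGraph V) [DecidableRel G.Adj]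
  (S : Finset V) {u w : V} (v : V)

def conflictSet (u w : V) : Finset V :=
  ((G.neighborFinset u ∪ G.neighborFinset w ∪ G.neighborFinset v) ∩ S) \ {u, w}

lemma conflictSet_subset : conflictSet G S v u w ⊆ S :=
  sdiff_subset.trans inter_subset_right

lemma disjoint_conflictSet : Disjoint {u, w} (conflictSet G S v u w) :=
  disjoint_sdiff_self_right

lemma card_conflictSet_le {Δ : ℕ}
    (hdeg : ∀ x ∈ ({u, w, v} : Finset V), #(G.neighborFinset x ∩ S) ≤ Δ) :
    #(conflictSet G S v u w) ≤ 3 * Δ := by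
  calc #(conflictSet G S v u w)
      ≤ #((G.neighborFinset u ∩ S ∪ G.neighborFinset w ∩ S) ∪ G.neighborFinset v ∩ S) := by
        rw [← union_inter_distrib_right, ← union_inter_distrib_right]
        exact card_le_card sdiff_subset
    _ ≤ #(G.neighborFinset u ∩ S) + #(G.neighborFinset w ∩ S) + #(G.neighborFinset v ∩ S) :=
        (card_union_le _ _).trans (Nat.add_le_add_right (card_union_le _ _) _)
    _ ≤ 3 * Δ := by
        have := hdeg u (by simp); have := hdeg w (by simp); have := hdeg v (by simp)
        omega

variable {G S}

lemma success_of_no_conflict_picks (hnadj : ¬ G.Adj u w) {ω : Outcome V χ} {c : Fin χ}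
    (hpick : ∀ x ∈ ({u, w} : Finset V), Picks S ω x c)
    (hfree : ∀ x ∈ conflictSet G S v u w, ¬ Picks S ω x c) :
    Picks S ω u c ∧ Picks S ω w c ∧ Retains G S ω u ∧ Retains G S ω w ∧
      ∀ x ∈ G.neighborFinset v ∩ S, x ≠ u → x ≠ w → ¬ Picks S ω x c := by
  have hfree' : ∀ x, x ≠ u → x ≠ w → (G.Adj u x ∨ G.Adj w x ∨ G.Adj v x) →
      ¬ Picks S ω x c := fun x hxu hxw hadj hx => hfree x (by
    simp only [conflictSet, mem_sdiff, mem_inter, mem_union, SimpleGraph.mem_neighborFinset,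
      mem_insert, mem_singleton]
    exact ⟨⟨by tauto, hx.1⟩, by tauto⟩) hx
  have hu := hpick u (by simp)
  have hw := hpick w (by simp)
  refine ⟨hu, hw, retains_of_picks hu fun x hadj => ?_, retains_of_picks hw fun x hadj => ?_,
    fun x hx hxu hxw => hfree' x hxu hxw (Or.inr (Or.inr ?_))⟩
  · exact hfree' x hadj.ne.symm (by rintro rfl; exact hnadj hadj) (Or.inl hadj)
  · exact hfree' x (by rintro rfl; exact hnadj hadj.symm) hadj.ne.symm (Or.inr (Or.inl hadj))
  · exact (SimpleGraph.mem_neighborFinset _ _ _).mp (mem_inter.mp hx).1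

end Conflicts

open Classical in
theorem per_nonedge_success_general {V : Type*} [Fintype V] [DecidableEq V]
    (G : SimpleGraph V) [DecidableRel G.Adj]
    (p₀ : ℝ) (hp₀ : p₀ ∈ Set.Ioc (0 : ℝ) 1)
    (χ Δs : ℕ) (hχ : 2 ≤ χ)
    (S : Finset V) (v u w : V)
    (hdeg : ∀ x ∈ S ∪ {v}, (G.neighborFinset x ∩ S).card ≤ Δs)
    (hu : u ∈ G.neighborFinset v ∩ S) (hw : w ∈ G.neighborFinset v ∩ S)
    (huw : u ≠ w) (hnadj : ¬ G.Adj u w) :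
    p₀ ^ 2 / (χ : ℝ) * (((χ : ℝ) - 1) / (χ : ℝ)) ^ (3 * Δs) ≤
      ∑ ω : Outcome V χ,
        (if ∃ c : Fin χ, Picks S ω u c ∧ Picks S ω w c ∧
              Retains G S ω u ∧ Retains G S ω w ∧
              ∀ x ∈ G.neighborFinset v ∩ S, x ≠ u → x ≠ w → ¬ Picks S ω x c
         then wgt p₀ χ ω else 0) := by
  have hp₀' : p₀ ∈ Set.Icc (0 : ℝ) 1 := Set.Ioc_subset_Icc_self hp₀
  have hχ0 : χ ≠ 0 := by omega
  have huwS : ({u, w} : Finset V) ⊆ S := insert_subset (mem_inter.mp hu).2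
    (singleton_subset_iff.mpr (mem_inter.mp hw).2)
  have hT : #(conflictSet G S v u w) ≤ 3 * Δs := card_conflictSet_le G S v fun x hx => hdeg x (by
    simp only [mem_insert, mem_singleton] at hx
    rcases hx with rfl | rfl | rfl <;> simp [(mem_inter.mp hu).2, (mem_inter.mp hw).2])
  calc p₀ ^ 2 / (χ : ℝ) * (((χ : ℝ) - 1) / (χ : ℝ)) ^ (3 * Δs)
      ≤ χ * ((p₀ / χ) ^ #({u, w} : Finset V) * (1 - p₀ / χ) ^ #(conflictSet G S v u w)) := by
        rw [card_pair huw, ← mul_assoc]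
        have : p₀ ^ 2 / (χ : ℝ) = χ * (p₀ / χ) ^ 2 := by field_simp
        rw [this]
        gcongr
        exact sub_one_div_pow_le_one_sub_div_pow hp₀' hχ0 hT
    _ = ∑ c : Fin χ, prob p₀ χ (fun ω => (∀ x ∈ ({u, w} : Finset V), Picks S ω x c) ∧
          ∀ x ∈ conflictSet G S v u w, ¬ Picks S ω x c) := by
        rw [Finset.sum_congr rfl fun c _ => prob_picks_and_not_picks hχ0 huwS
          (conflictSet_subset G S v) (disjoint_conflictSet G S v) c]
        simp only [sum_const, card_univ, Fintype.card_fin, nsmul_eq_mul]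
    _ ≤ _ := sum_prob_le_prob hp₀' _ _
          (fun ω c c' hc hc' => (hc.1 u (mem_insert_self _ _)).2.2.symm.trans
            (hc'.1 u (mem_insert_self _ _)).2.2)
          fun ω c hc => ⟨c, success_of_no_conflict_picks v hnadj hc.1 hc.2⟩

open Classical in
/-- **Per-non-edge success probability in SlackGeneration.** Run SlackGeneration
on `S` with activation probability `p₀ ∈ (0,1]` and palette `[χ]`, `χ ≥ 2`.
Suppose every node of `S ∪ {v}` has at most `Δs ≥ 2` neighbors in `S`, and let
`{u, w} ⊆ N(v) ∩ S` be a non-adjacent pair. Then the probability that `u` and `w`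
are both activated with a common color which both retain and which no node of
`(N(v) ∩ S) \ {u, w}` picks is at least `(p₀²/χ)·((χ−1)/χ)^{3Δs}`. -/
theorem per_nonedge_success {V : Type*} [Fintype V] [DecidableEq V]
    (G : SimpleGraph V) [DecidableRel G.Adj]
    (p₀ : ℝ) (hp₀ : p₀ ∈ Set.Ioc (0 : ℝ) 1)
    (χ Δs : ℕ) (hχ : 2 ≤ χ) (hΔs : 2 ≤ Δs)
    (S : Finset V) (v u w : V)
    (hdeg : ∀ x ∈ S ∪ {v}, (G.neighborFinset x ∩ S).card ≤ Δs)
    (hu : u ∈ G.neighborFinset v ∩ S) (hw : w ∈ G.neighborFinset v ∩ S)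
    (huw : u ≠ w) (hnadj : ¬ G.Adj u w) :
    p₀ ^ 2 / (χ : ℝ) * (((χ : ℝ) - 1) / (χ : ℝ)) ^ (3 * Δs) ≤
      ∑ ω : Outcome V χ,
        (if ∃ c : Fin χ, Picks S ω u c ∧ Picks S ω w c ∧
              Retains G S ω u ∧ Retains G S ω w ∧
              ∀ x ∈ G.neighborFinset v ∩ S, x ≠ u → x ≠ w → ¬ Picks S ω x c
         then wgt p₀ χ ω else 0) :=
  per_nonedge_success_general G p₀ hp₀ χ Δs hχ S v u w hdeg hu hw huw hnadj

end SlackGen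
end

section
/- Successful non-edges have distinct colors: run SlackGeneration on S ⊆ V with activation probability p₀ and palette [χ], and fix a node v. Call a non-adjacent pair {u, w} ⊆ N(v) ∩ S successful if u and w are both activated with a common color c, both retain c, and no node of (N(v) ∩ S) \ {u, w} picks c. Then any two distinct successful pairs have distinct common colors, and consequently the slack increase of v — the number of neighbors of v that retain a color minus the number of distinct colors retained by neighbors of v — is at least the number of successful pairs. -/
open Finset

namespace SlackGen

/-- The pair `{u, w}` is successful (for node `v`): `u ≠ w` are non-adjacent
neighbors of `v` in `S`, both are activated with a common color `c`, both retain
`c`, and no node of `(N(v) ∩ S) \ {u, w}` picks `c`. -/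
def SuccessPair {V : Type*} [Fintype V] [DecidableEq V] {χ : ℕ}
    (G : SimpleGraph V) (S : Finset V) (v : V) (ω : Outcome V χ) (u w : V) : Prop :=
  u ≠ w ∧ G.Adj v u ∧ G.Adj v w ∧ u ∈ S ∧ w ∈ S ∧ ¬ G.Adj u w ∧
    ∃ c : Fin χ, Picks S ω u c ∧ Picks S ω w c ∧
      Retains G S ω u ∧ Retains G S ω w ∧
      ∀ x, G.Adj v x → x ∈ S → x ≠ u → x ≠ w → ¬ Picks S ω x c

open Classical in
/-- **Successful non-edges have distinct colors.** In any outcome of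
SlackGeneration, two distinct successful pairs (for `v`) have distinct common
colors; consequently the slack increase of `v` — the number of neighbors of `v`
retaining a color minus the number of distinct colors retained by neighbors of
`v` — is at least the number of successful pairs. -/
theorem successful_pairs_distinct_colors {V : Type*} [Fintype V] [DecidableEq V]
    (G : SimpleGraph V) (χ : ℕ) (S : Finset V) (v : V) (ω : Outcome V χ) :
    (∀ u w u' w' : V, SuccessPair G S v ω u w → SuccessPair G S v ω u' w' →
        ({u, w} : Finset V) ≠ ({u', w'} : Finset V) → ω.2 u ≠ ω.2 u') ∧
      ((Finset.univ.filter fun e : Sym2 V =>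
            ∃ u w, e = s(u, w) ∧ SuccessPair G S v ω u w).card : ℤ)
        ≤ slackInc G S v ω := by
  classical
  have key : ∀ u w u' w' : V, SuccessPair G S v ω u w → SuccessPair G S v ω u' w' →
      ω.2 u = ω.2 u' → ({u, w} : Finset V) = ({u', w'} : Finset V) := by
    intro u w u' w' h h' hc
    obtain ⟨huw, hvu, hvw, huS, hwS, hnadj, c, pu, pw, ru, rw, hno⟩ := h
    obtain ⟨huw', hvu', hvw', huS', hwS', hnadj', c', pu', pw', ru', rw', hno'⟩ := h'
    have hcc : c = c' := by rw [← pu.2.2, ← pu'.2.2, hc]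
    have mem : ∀ x, Picks S ω x c' → G.Adj v x → x ∈ S → x ∈ ({u, w} : Finset V) := by
      intro x px hvx hxS
      by_contra hx
      simp only [Finset.mem_insert, Finset.mem_singleton, not_or] at hx
      exact hno x hvx hxS hx.1 hx.2 (hcc ▸ px)
    have hsub : ({u', w'} : Finset V) ⊆ {u, w} := by
      intro x hx
      simp only [Finset.mem_insert, Finset.mem_singleton] at hx
      rcases hx with rfl | rfl
      · exact mem x pu' hvu' huS'
      · exact mem x pw' hvw' hwS'
    exact (Finset.eq_of_subset_of_card_le hsub (by
      rw [Finset.card_pair huw, Finset.card_pair huw'])).symm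
  refine ⟨fun u w u' w' h1 h2 hne hc => hne (key u w u' w' h1 h2 hc), ?_⟩
  unfold slackInc
  rcases isEmpty_or_nonempty V with hV | hV
  · simp
  inhabit V
  set R : Finset V := Finset.univ.filter fun u => G.Adj v u ∧ Retains G S ω u with hR
  set C : Finset (Fin χ) := Finset.univ.filter fun c : Fin χ =>
      ∃ u, G.Adj v u ∧ Retains G S ω u ∧ ω.2 u = c with hC
  set E : Finset (Sym2 V) := Finset.univ.filter fun e : Sym2 V =>
      ∃ u w, e = s(u, w) ∧ SuccessPair G S v ω u w with hE
  set t : Finset (Fin χ) := Finset.univ.filter fun c : Fin χ =>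
      ∃ u w, SuccessPair G S v ω u w ∧ ω.2 u = c with ht
  -- step 1 : E.card ≤ t.card
  have hEt : E.card ≤ t.card := by
    apply Finset.card_le_card_of_surjOn
      (f := fun c : Fin χ => if h : ∃ u w, SuccessPair G S v ω u w ∧ ω.2 u = c then
        s(h.choose, h.choose_spec.choose) else s(default, default))
    intro e he
    simp only [Finset.coe_filter, Set.mem_setOf_eq, Finset.mem_univ, true_and, hE] at he
    obtain ⟨u, w, rfl, hsp⟩ := he
    refine ⟨ω.2 u, ?_, ?_⟩
    · simp only [ht, Finset.coe_filter, Set.mem_setOf_eq, Finset.mem_univ, true_and]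
      exact ⟨u, w, hsp, rfl⟩
    · have hex : ∃ u' w', SuccessPair G S v ω u' w' ∧ ω.2 u' = ω.2 u := ⟨u, w, hsp, rfl⟩
      have huniq : ∀ u0 w0, SuccessPair G S v ω u0 w0 → ω.2 u0 = ω.2 u →
          s(u0, w0) = s(u, w) := by
        intro u0 w0 hsp0 hc0
        have hfe : ({u0, w0} : Finset V) = {u, w} := key u0 w0 u w hsp0 hsp hc0
        have hu0 : u0 ∈ ({u, w} : Finset V) := hfe ▸ Finset.mem_insert_self _ _
        have hw0 : w0 ∈ ({u, w} : Finset V) := hfe ▸ (by simp)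
        have hne0 : u0 ≠ w0 := hsp0.1
        simp only [Finset.mem_insert, Finset.mem_singleton] at hu0 hw0
        rw [Sym2.eq_iff]
        rcases hu0 with rfl | rfl
        · left; exact ⟨rfl, hw0.resolve_left (Ne.symm hne0)⟩
        · right; exact ⟨rfl, hw0.resolve_right (Ne.symm hne0)⟩
      beta_reduce
      rw [dif_pos hex]
      exact huniq _ _ hex.choose_spec.choose_spec.1 hex.choose_spec.choose_spec.2
  -- step 2 : (t.card : ℤ) ≤ R.card - C.card
  have htC : t ⊆ C := by
    intro c hc
    simp only [ht, Finset.mem_filter, Finset.mem_univ, true_and] at hc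
    obtain ⟨u, w, hsp, hcu⟩ := hc
    simp only [hC, Finset.mem_filter, Finset.mem_univ, true_and]
    exact ⟨u, hsp.2.1, hsp.2.2.2.2.2.2.choose_spec.2.2.1, hcu⟩
  have hRC : ∀ a ∈ R, ω.2 a ∈ C := by
    intro a ha
    simp only [hR, Finset.mem_filter, Finset.mem_univ, true_and] at ha
    simp only [hC, Finset.mem_filter, Finset.mem_univ, true_and]
    exact ⟨a, ha.1, ha.2, rfl⟩
  have hcardR : R.card = ∑ b ∈ C, (R.filter fun a => ω.2 a = b).card :=
    Finset.card_eq_sum_card_fiberwise hRC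
  have hfib2 : ∀ b ∈ t, 2 ≤ (R.filter fun a => ω.2 a = b).card := by
    intro b hb
    simp only [ht, Finset.mem_filter, Finset.mem_univ, true_and] at hb
    obtain ⟨u, w, hsp, hcu⟩ := hb
    obtain ⟨c, pu, pw, ru, rw, -⟩ := hsp.2.2.2.2.2.2
    have hcw : ω.2 w = b := by rw [pw.2.2, ← pu.2.2, hcu]
    refine Finset.one_lt_card.mpr ⟨u, ?_, w, ?_, hsp.1⟩
    · simp only [hR, Finset.mem_filter, Finset.mem_univ, true_and]
      exact ⟨⟨hsp.2.1, ru⟩, hcu⟩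
    · simp only [hR, Finset.mem_filter, Finset.mem_univ, true_and]
      exact ⟨⟨hsp.2.2.1, rw⟩, hcw⟩
  have hfib1 : ∀ b ∈ C, 1 ≤ (R.filter fun a => ω.2 a = b).card := by
    intro b hb
    simp only [hC, Finset.mem_filter, Finset.mem_univ, true_and] at hb
    obtain ⟨u, h1, h2, h3⟩ := hb
    refine Finset.card_pos.mpr ⟨u, ?_⟩
    simp only [hR, Finset.mem_filter, Finset.mem_univ, true_and]
    exact ⟨⟨h1, h2⟩, h3⟩
  have hmain : (t.card : ℤ) ≤ (R.card : ℤ) - (C.card : ℤ) := by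
    have h1 : (R.card : ℤ) - (C.card : ℤ)
        = ∑ b ∈ C, (((R.filter fun a => ω.2 a = b).card : ℤ) - 1) := by
      rw [Finset.sum_sub_distrib, Finset.sum_const, nsmul_eq_mul, mul_one, hcardR]
      push_cast
      ring
    rw [h1]
    calc (t.card : ℤ) = ∑ _b ∈ t, (1 : ℤ) := by
            rw [Finset.sum_const, nsmul_eq_mul, mul_one]
      _ ≤ ∑ b ∈ t, (((R.filter fun a => ω.2 a = b).card : ℤ) - 1) := by
            refine Finset.sum_le_sum fun b hb => ?_
            have := hfib2 b hb
            omega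
      _ ≤ ∑ b ∈ C, (((R.filter fun a => ω.2 a = b).card : ℤ) - 1) := by
            refine Finset.sum_le_sum_of_subset_of_nonneg htC fun b hb _ => ?_
            have := hfib1 b hb
            omega
  calc (E.card : ℤ) ≤ (t.card : ℤ) := by exact_mod_cast hEt
    _ ≤ (R.card : ℤ) - (C.card : ℤ) := hmain


end SlackGen
end

section
/- Risk of the degree-bound event: There is a universal constant a > 0 such that the following holds. Let v be a node with d(v) neighbors, each independently colored black with probability q. Let E be the event that the number of black neighbors of v is at least 3q·d(v), and E' the event that it is at least (3/2)q·d(v). Then E ⊆ E', Pr(E') ≤ exp(−a·q·d(v)), and Pr(E | ψ) ≤ exp(−a·q·d(v)) for every partial assignment ψ ∈ Respect(E'); that is, E' testifies risk exp(−a·q·d(v)) for E. -/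
open Finset

namespace LLLRisk

section Aux

variable {V : Type} [Fintype V] [DecidableEq V]

lemma wgt_nonneg_s19 {q : ℝ} (h0 : 0 ≤ q) (h1 : q ≤ 1) (b : Col) : 0 ≤ wgt q b := by
  unfold wgt; split <;> linarith

lemma numBlack_cast (φ : V → Col) :
    (numBlack φ : ℝ) = ∑ i : V, (if φ i = black then (1:ℝ) else 0) := by
  rw [numBlack, Finset.card_filter]
  push_cast
  rfl

open Classical in
lemma key_bound {q t T B : ℝ}
    (hq0 : 0 ≤ q) (hq1 : q ≤ 1) (ht : 0 ≤ t)
    (ψ : V → Option Col)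
    (hB : ((Finset.univ.filter fun i => ψ i = some black).card : ℝ) ≤ B) :
    condPr (fun _ => q) {φ : V → Col | T ≤ (numBlack φ : ℝ)} ψ ≤
      Real.exp (t * B + q * (Real.exp t - 1) * (Fintype.card V : ℝ) - t * T) := by
  classical
  have het : (1:ℝ) ≤ Real.exp t := by
    rw [← Real.exp_zero]; exact Real.exp_le_exp.mpr ht
  set G : V → Col → ℝ := fun i c =>
    (if ψ i = none ∨ ψ i = some c then (1:ℝ) else 0) *
      (if ψ i = none then wgt q c else 1) *
      Real.exp (t * (if c = black then 1 else 0)) with hG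
  have hGnonneg : ∀ i c, 0 ≤ G i c := by
    intro i c
    apply mul_nonneg (mul_nonneg _ _) (Real.exp_nonneg _)
    · split <;> norm_num
    · split
      · exact wgt_nonneg_s19 hq0 hq1 c
      · norm_num
  have step1 : condPr (fun _ => q) {φ : V → Col | T ≤ (numBlack φ : ℝ)} ψ ≤
      Real.exp (-(t*T)) * ∑ φ : V → Col, ∏ i, G i (φ i) := by
    rw [condPr, Finset.mul_sum]
    apply Finset.sum_le_sum
    intro φ _
    by_cases hA : Agrees ψ φ
    · have hind : ∀ i : V, (if ψ i = none ∨ ψ i = some (φ i) then (1:ℝ) else 0) = 1 := by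
        intro i
        rw [if_pos]
        cases hψ : ψ i with
        | none => exact Or.inl rfl
        | some b => exact Or.inr (by rw [hA i b hψ])
      have hprod : ∏ i, G i (φ i) =
          (∏ i : V, (if ψ i = none then wgt q (φ i) else 1)) *
            Real.exp (t * (numBlack φ : ℝ)) := by
        simp only [hG, hind, one_mul]
        rw [Finset.prod_mul_distrib, numBlack_cast, Finset.mul_sum, Real.exp_sum]
      have hwnn : 0 ≤ ∏ i : V, (if ψ i = none then wgt q (φ i) else 1) := by
        apply Finset.prod_nonneg
        intro i _
        split
        · exact wgt_nonneg_s19 hq0 hq1 _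
        · norm_num
      rw [hprod]
      by_cases hE : φ ∈ {φ : V → Col | T ≤ (numBlack φ : ℝ)}
      · rw [if_pos ⟨hA, hE⟩]
        have h1 : (1:ℝ) ≤ Real.exp (-(t*T)) * Real.exp (t * (numBlack φ : ℝ)) := by
          rw [← Real.exp_add, ← Real.exp_zero]
          apply Real.exp_le_exp.mpr
          have : T ≤ (numBlack φ : ℝ) := hE
          nlinarith
        calc (∏ i : V, (if ψ i = none then wgt q (φ i) else 1))
            = (∏ i : V, (if ψ i = none then wgt q (φ i) else 1)) * 1 := by ring
          _ ≤ (∏ i : V, (if ψ i = none then wgt q (φ i) else 1)) *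
                (Real.exp (-(t*T)) * Real.exp (t * (numBlack φ : ℝ))) := by
              exact mul_le_mul_of_nonneg_left h1 hwnn
          _ = Real.exp (-(t*T)) *
                ((∏ i : V, (if ψ i = none then wgt q (φ i) else 1)) *
                  Real.exp (t * (numBlack φ : ℝ))) := by ring
      · rw [if_neg (fun h => hE h.2)]
        positivity
    · rw [if_neg (fun h => hA h.1)]
      have : 0 ≤ ∏ i, G i (φ i) := Finset.prod_nonneg fun i _ => hGnonneg i (φ i)
      positivity
  have step2 : ∑ φ : V → Col, ∏ i, G i (φ i) = ∏ i : V, ∑ c : Col, G i c :=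
    (Fintype.prod_sum _).symm
  have step3 : ∀ i : V, ∑ c : Col, G i c ≤
      Real.exp (q * (Real.exp t - 1) + t * (if ψ i = some black then 1 else 0)) := by
    intro i
    have h1 : 0 ≤ q * (Real.exp t - 1) := by nlinarith
    have h2 := Real.add_one_le_exp (q * (Real.exp t - 1))
    rw [Fintype.sum_bool]
    cases hψ : ψ i with
    | none =>
        simp only [hG, hψ, wgt, black, reduceCtorEq, if_false, add_zero]
        norm_num
        nlinarith
    | some b =>
        cases b with
        | true =>
            simp only [hG, hψ, wgt, black, reduceCtorEq, if_false, add_zero]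
            norm_num
            nlinarith [Real.exp_le_exp.mpr (show t ≤ q * (Real.exp t - 1) + t by linarith),
              Real.exp_pos t]
        | false =>
            simp only [hG, hψ, wgt, black, reduceCtorEq, if_false, add_zero]
            norm_num
            nlinarith
  have step4 : ∏ i : V, ∑ c : Col, G i c ≤
      Real.exp (t * B + q * (Real.exp t - 1) * (Fintype.card V : ℝ)) := by
    calc ∏ i : V, ∑ c : Col, G i c
        ≤ ∏ i : V, Real.exp (q * (Real.exp t - 1) +
            t * (if ψ i = some black then 1 else 0)) := by
          apply Finset.prod_le_prod
          · intro i _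
            exact Finset.sum_nonneg fun c _ => hGnonneg i c
          · intro i _
            exact step3 i
      _ = Real.exp (∑ i : V, (q * (Real.exp t - 1) +
            t * (if ψ i = some black then 1 else 0))) := (Real.exp_sum _ _).symm
      _ ≤ Real.exp (t * B + q * (Real.exp t - 1) * (Fintype.card V : ℝ)) := by
          apply Real.exp_le_exp.mpr
          have hsum : ∑ i : V, (q * (Real.exp t - 1) +
              t * (if ψ i = some black then 1 else 0)) =
              q * (Real.exp t - 1) * (Fintype.card V : ℝ) +
              t * ((Finset.univ.filter fun i => ψ i = some black).card : ℝ) := by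
            rw [Finset.sum_add_distrib, Finset.sum_const, nsmul_eq_mul,
              Finset.card_univ, ← Finset.mul_sum, Finset.sum_boole]
            ring
          rw [hsum]
          have h3 : t * ((Finset.univ.filter fun i => ψ i = some black).card : ℝ) ≤
              t * B := mul_le_mul_of_nonneg_left hB ht
          linarith
  calc condPr (fun _ => q) {φ : V → Col | T ≤ (numBlack φ : ℝ)} ψ
      ≤ Real.exp (-(t*T)) * ∑ φ : V → Col, ∏ i, G i (φ i) := step1
    _ = Real.exp (-(t*T)) * ∏ i : V, ∑ c : Col, G i c := by rw [step2]
    _ ≤ Real.exp (-(t*T)) *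
          Real.exp (t * B + q * (Real.exp t - 1) * (Fintype.card V : ℝ)) :=
        mul_le_mul_of_nonneg_left step4 (Real.exp_nonneg _)
    _ = Real.exp (t * B + q * (Real.exp t - 1) * (Fintype.card V : ℝ) - t * T) := by
        rw [← Real.exp_add]; ring_nf

end Aux

/-- **Risk of the degree-bound event.** There is a universal constant `a > 0` such
that for any node `v` whose `d(v)` neighbors (the variables, indexed by `V`) are
independently black with probability `q`, the event `E'` that at least
`(3/2)·q·d(v)` neighbors are black testifies risk `exp(−a·q·d(v))` for the event
`E` that at least `3·q·d(v)` neighbors are black. -/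
theorem degree_event_risk :
    ∃ a : ℝ, 0 < a ∧
      ∀ (V : Type) [Fintype V] [DecidableEq V] (q : ℝ), q ∈ Set.Icc (0 : ℝ) 1 →
        Testifies (V := V) (fun _ => q) Finset.univ
          {φ : V → Col | 3 * q * (Fintype.card V : ℝ) ≤ (numBlack φ : ℝ)}
          {φ : V → Col | 3 / 2 * q * (Fintype.card V : ℝ) ≤ (numBlack φ : ℝ)}
          (Real.exp (-(a * q * (Fintype.card V : ℝ)))) := by
  classical
  refine ⟨3/2 * Real.log (3/2) - 1/2, ?_, ?_⟩
  · -- positivity of the constant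
    have h1 : (1:ℝ)/3 < Real.log (3/2) := by
      rw [Real.lt_log_iff_exp_lt (by norm_num : (0:ℝ) < 3/2)]
      have hcube : Real.exp ((1:ℝ)/3) ^ 3 = Real.exp 1 := by
        rw [← Real.exp_nat_mul]; norm_num
      have he : Real.exp 1 < 2.7182818286 := Real.exp_one_lt_d9
      by_contra h
      push_neg at h
      have h3 := pow_le_pow_left₀ (by norm_num : (0:ℝ) ≤ 3/2) h 3
      rw [hcube] at h3
      norm_num at h3
      linarith
    linarith
  · intro V _ _ q hq
    obtain ⟨hq0, hq1⟩ := hq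
    set t : ℝ := Real.log (3/2) with htdef
    have ht : 0 ≤ t := Real.log_nonneg (by norm_num)
    have hexpt : Real.exp t = 3/2 := Real.exp_log (by norm_num)
    set n : ℝ := (Fintype.card V : ℝ) with hn
    have hn0 : 0 ≤ n := Nat.cast_nonneg _
    refine ⟨?_, ?_, ?_⟩
    · -- E ⊆ E'
      intro φ hφ
      simp only [Set.mem_setOf_eq] at hφ ⊢
      nlinarith
    · -- pr E' ≤ exp(-a q n)
      have hkey := key_bound (V := V) hq0 hq1 ht (fun _ => none)
        (B := 0) (T := 3/2 * q * n) (by simp)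
      have heq : t * 0 + q * (Real.exp t - 1) * n - t * (3/2 * q * n) =
          -((3/2 * t - 1/2) * q * n) := by
        rw [hexpt]; ring
      rw [pr]
      calc condPr (fun _ => q)
            {φ : V → Col | 3/2 * q * n ≤ (numBlack φ : ℝ)} (fun _ => none)
          ≤ Real.exp (t * 0 + q * (Real.exp t - 1) * n - t * (3/2 * q * n)) := hkey
        _ = Real.exp (-((3/2 * t - 1/2) * q * n)) := by rw [heq]
    · -- conditional bound on respecting partial assignments
      intro ψ hψ
      obtain ⟨φ, hφE', hAg, -⟩ := hψ
      simp only [Set.mem_setOf_eq, not_le] at hφE'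
      have hsub : (Finset.univ.filter fun i => ψ i = some black) ⊆
          (Finset.univ.filter fun i => φ i = black) := by
        intro i hi
        simp only [Finset.mem_filter, Finset.mem_univ, true_and] at hi ⊢
        exact hAg i black hi
      have hB : ((Finset.univ.filter fun i => ψ i = some black).card : ℝ) ≤
          3/2 * q * n := by
        have h1 := Finset.card_le_card hsub
        have h2 : ((Finset.univ.filter fun i => φ i = black).card : ℝ) =
            (numBlack φ : ℝ) := by rw [numBlack]
        calc ((Finset.univ.filter fun i => ψ i = some black).card : ℝ)
            ≤ ((Finset.univ.filter fun i => φ i = black).card : ℝ) := by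
              exact_mod_cast h1
          _ = (numBlack φ : ℝ) := h2
          _ ≤ 3/2 * q * n := le_of_lt hφE'
      have hkey := key_bound (V := V) hq0 hq1 ht ψ
        (B := 3/2 * q * n) (T := 3 * q * n) hB
      have heq : t * (3/2 * q * n) + q * (Real.exp t - 1) * n - t * (3 * q * n) =
          -((3/2 * t - 1/2) * q * n) := by
        rw [hexpt]; ring
      calc condPr (fun _ => q) {φ : V → Col | 3 * q * n ≤ (numBlack φ : ℝ)} ψ
          ≤ Real.exp (t * (3/2 * q * n) + q * (Real.exp t - 1) * n -
              t * (3 * q * n)) := hkey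
        _ = Real.exp (-((3/2 * t - 1/2) * q * n)) := by rw [heq]

end LLLRisk
end
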